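/- arXiv:2506.04400 — 3 statements merged into one kernel-verified Lean document; each statement's English description precedes it below -/
import Mathlib

section
/- For any d×d complex matrix A, det(I_d + A) = Σ_{n=0}^d (1/n!) Σ_{σ ∈ S_n} sgn(σ) · Π_{c} tr(A^{ℓ(c)}), where the product is over all disjoint cycles c of σ (fixed points counted as cycles of length 1) and ℓ(c) denotes the length of the cycle c; equivalently the inner product equals (tr A)^{f(σ)} · Π_{c nontrivial} tr(A^{ℓ(c)}) where f(σ) is the number of fixed points of σ. -/
/-!
Expanding `det (1 + A)` multilinearly in the rows gives the sum of all principal minors. The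
principal minors of size `n` add up to `(1/n!) ∑_{g : Fin n → Fin d} det (A.submatrix g g)`:
non-injective `g` give a repeated row, and every `n`-subset is the image of exactly `n!` injective
`g`. Expanding each of these determinants by the Leibniz formula and exchanging the two sums turns
this into `(1/n!) ∑_σ sgn σ · T σ` with `T σ = ∑_g ∏_i A (g (σ i)) (g i)` (`permTrace A σ`).
Splitting the index set along a `σ`-invariant subset factors `T`, and on a single cycle of length
`ℓ` (conjugate to `finRotate ℓ`) `T` is the sum over closed paths of length `ℓ`, i.e.
`tr (A ^ ℓ)`. Hence `T σ` is the product of `tr (A ^ ℓ)` over the cycles of `σ`, fixed points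
included.
-/

open Equiv Finset Matrix

open scoped Nat

namespace Equiv.Perm

variable {α β : Type*} {p : α → Prop} [DecidablePred p]

theorem subtypeCongr_subtypePerm (σ : Perm α) (h : ∀ x, p (σ x) ↔ p x) :
    (σ.subtypePerm h).subtypeCongr (σ.subtypePerm fun x => not_congr (h x)) = σ := by
  ext x
  by_cases hx : p x
  · simp [subtypeCongr.left_apply _ _ hx]
  · simp [subtypeCongr.right_apply _ _ hx]

theorem subtypeCongr_eq_ofSubtype_mul_ofSubtype (ep : Perm {a // p a}) (en : Perm {a // ¬p a}) :
    ep.subtypeCongr en = ofSubtype ep * ofSubtype en := by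
  ext x
  by_cases hx : p x
  · simp [subtypeCongr.left_apply _ _ hx, ofSubtype_apply_of_not_mem en (not_not_intro hx),
      ofSubtype_apply_of_mem ep hx]
  · simp [subtypeCongr.right_apply _ _ hx, ofSubtype_apply_of_mem en hx,
      ofSubtype_apply_of_not_mem ep (en ⟨x, hx⟩).2]

theorem disjoint_ofSubtype_ofSubtype (ep : Perm {a // p a}) (en : Perm {a // ¬p a}) :
    Disjoint (ofSubtype ep) (ofSubtype en) := fun x => by
  by_cases hx : p x
  · exact .inr (ofSubtype_apply_of_not_mem en (not_not_intro hx))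
  · exact .inl (ofSubtype_apply_of_not_mem ep hx)

theorem IsCycle.permCongr {σ : Perm α} (hσ : σ.IsCycle) (e : α ≃ β) :
    (e.permCongr σ).IsCycle := by
  obtain ⟨x, hx, h⟩ := hσ
  refine ⟨e x, by simpa [permCongr_apply] using hx, fun y hy => ?_⟩
  obtain ⟨k, hk⟩ := h (y := e.symm y) (by simpa [permCongr_apply, eq_symm_apply] using hy)
  refine ⟨k, ?_⟩
  rw [← e.permCongrHom_coe, ← map_zpow]
  simp [permCongr_apply, hk]

theorem support_permCongr [DecidableEq α] [Fintype α] [DecidableEq β] [Fintype β] (σ : Perm α)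
    (e : α ≃ β) :
    (e.permCongr σ).support = σ.support.map e.toEmbedding := by
  ext y
  simp [permCongr_apply, eq_symm_apply]

theorem isCycle_subtypePerm_sameCycle {σ : Perm α} {a : α} (ha : σ a ≠ a) :
    (σ.subtypePerm fun _ => sameCycle_apply_right : Perm {x // σ.SameCycle a x}).IsCycle :=
  ⟨⟨a, .refl _ _⟩, fun h => ha (congrArg Subtype.val h), fun b _ => b.2.subtypePerm⟩

theorem support_subtypePerm_sameCycle [DecidableEq α] [Fintype α] {σ : Perm α} {a : α}
    (ha : σ a ≠ a) :
    (σ.subtypePerm fun _ => sameCycle_apply_right : Perm {x // σ.SameCycle a x}).support = univ :=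
  eq_univ_of_forall fun b => by simpa [Subtype.ext_iff] using mt b.2.apply_eq_self_iff.2 ha

variable [DecidableEq α] [Fintype α] (ep : Perm {a // p a}) (en : Perm {a // ¬p a})

theorem cycleType_subtypeCongr :
    (ep.subtypeCongr en).cycleType = ep.cycleType + en.cycleType := by
  rw [subtypeCongr_eq_ofSubtype_mul_ofSubtype, (disjoint_ofSubtype_ofSubtype ep en).cycleType_mul,
    cycleType_ofSubtype, cycleType_ofSubtype]

theorem card_support_subtypeCongr :
    #(ep.subtypeCongr en).support = #ep.support + #en.support := by
  rw [subtypeCongr_eq_ofSubtype_mul_ofSubtype,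
    (disjoint_ofSubtype_ofSubtype ep en).card_support_mul, support_ofSubtype, support_ofSubtype,
    card_map, card_map]

theorem parts_partition_subtypeCongr :
    (ep.subtypeCongr en).partition.parts = ep.partition.parts + en.partition.parts := by
  have hep := ep.support.card_le_univ
  have hen := en.support.card_le_univ
  have hcompl := Fintype.card_subtype_compl p
  have hsub := Fintype.card_subtype_le p
  simp only [parts_partition, cycleType_subtypeCongr, card_support_subtypeCongr]
  rw [add_add_add_comm, ← Multiset.replicate_add]
  congr 2
  omega

theorem parts_partition_of_isCycle {σ : Perm α} (hσ : σ.IsCycle) (h : σ.support = univ) :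
    σ.partition.parts = {Fintype.card α} := by
  simp [parts_partition, hσ.cycleType, h]

end Equiv.Perm

theorem Finset.sum_filter_injective_eq_sum_powersetCard {n M : Type*} [Fintype n] [DecidableEq n]
    [AddCommMonoid M] (k : ℕ) (f : (Fin k → n) → M) :
    ∑ g with Function.Injective g, f g =
      ∑ s ∈ univ.powersetCard k, ∑ e : Fin k ≃ s, f (Subtype.val ∘ e) := by
  rw [Finset.sum_sigma']
  symm
  refine Finset.sum_bij (fun p _ => Subtype.val ∘ p.2) ?_ ?_ ?_ fun _ _ => rfl
  · rintro ⟨s, e⟩ -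
    simpa using Subtype.val_injective.comp e.injective
  · have himage (s : Finset n) (e : Fin k ≃ s) : univ.image (Subtype.val ∘ e) = s := by
      ext x
      simp only [mem_image, mem_univ, true_and, Function.comp_apply]
      exact ⟨fun ⟨i, hi⟩ => hi ▸ (e i).2, fun hx => ⟨e.symm ⟨x, hx⟩, by simp⟩⟩
    rintro ⟨s, e⟩ - ⟨t, e'⟩ - (h : Subtype.val ∘ e = Subtype.val ∘ e')
    obtain rfl : s = t := by rw [← himage s e, ← himage t e', h]
    exact Sigma.ext rfl (heq_of_eq (Equiv.ext fun i => Subtype.ext (congrFun h i)))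
  · intro g hg
    replace hg : g.Injective := (mem_filter.1 hg).2
    let e : Fin k → univ.image g := fun i => ⟨g i, mem_image_of_mem g (mem_univ i)⟩
    have he : e.Bijective := ⟨fun i j h => hg (congrArg Subtype.val h), fun ⟨x, hx⟩ => by
      obtain ⟨i, -, rfl⟩ := mem_image.1 hx
      exact ⟨i, rfl⟩⟩
    refine ⟨⟨univ.image g, Equiv.ofBijective e he⟩, ?_, rfl⟩
    simp [mem_powersetCard, card_image_of_injective _ hg]

namespace Matrix

variable {n ι κ : Type*} [Fintype n] [Fintype ι] [DecidableEq ι] [Fintype κ] [DecidableEq κ]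

section CommSemiring

variable {R : Type*} [CommSemiring R] (A : Matrix n n R)

/-- The trace of `A^{⊗ι}` composed with the permutation of the tensor factors by `σ`. -/
def permTrace (σ : Perm ι) : R :=
  ∑ g : ι → n, ∏ i, A (g (σ i)) (g i)

theorem permTrace_permCongr (e : ι ≃ κ) (σ : Perm ι) :
    permTrace A (e.permCongr σ) = permTrace A σ := by
  refine Fintype.sum_equiv (e.arrowCongr (Equiv.refl n)).symm _ _ fun g => ?_
  exact Fintype.prod_equiv e.symm _ _ fun j => by simp

theorem permTrace_sumCongr (σ : Perm ι) (τ : Perm κ) :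
    permTrace A (σ.sumCongr τ) = permTrace A σ * permTrace A τ := by
  rw [permTrace, permTrace, permTrace, Fintype.sum_mul_sum, ← Fintype.sum_prod_type']
  refine Fintype.sum_equiv (sumArrowEquivProdArrow ι κ n) _ _ fun g => ?_
  simp [Fintype.prod_sum_type]

theorem permTrace_subtypeCongr {p : ι → Prop} [DecidablePred p] (ep : Perm {i // p i})
    (en : Perm {i // ¬p i}) :
    permTrace A (ep.subtypeCongr en) = permTrace A ep * permTrace A en := by
  rw [Perm.subtypeCongr, permTrace_permCongr, permTrace_sumCongr]

theorem permTrace_one : permTrace A (1 : Perm ι) = trace A ^ Fintype.card ι := by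
  rw [trace, ← Finset.card_univ, ← Finset.prod_const, Fintype.prod_sum]
  rfl

variable [DecidableEq n]

theorem trace_mul_pow_eq_sum_path (m : ℕ) (B : Matrix n n R) :
    trace (B * A ^ m) = ∑ g : Fin (m + 1) → n,
      (∏ i : Fin m, A (g i.succ) (g i.castSucc)) * B (g 0) (g (Fin.last m)) := by
  induction m generalizing B with
  | zero =>
    simp only [pow_zero, mul_one, univ_eq_empty, prod_empty, one_mul]
    exact Fintype.sum_equiv (Equiv.funUnique (Fin 1) n).symm _ _ fun _ => rfl
  | succ m ih =>
    rw [pow_succ, ← mul_assoc, trace_mul_comm, ← mul_assoc, ih, eq_comm,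
      ← (Fin.consEquiv fun _ : Fin (m + 2) => n).sum_comp, Fintype.sum_prod_type, Finset.sum_comm]
    refine Finset.sum_congr rfl fun g _ => ?_
    simp only [Fin.consEquiv, coe_fn_mk, Fin.prod_univ_succ, Fin.cons_zero, Fin.cons_succ,
      mul_apply, Finset.mul_sum]
    refine Finset.sum_congr rfl fun x _ => ?_
    rw [Fin.castSucc_zero, ← Fin.succ_last, Fin.cons_zero, Fin.cons_succ]
    simp only [← Fin.succ_castSucc, Fin.cons_succ]
    ring

theorem permTrace_finRotate (m : ℕ) : permTrace A (finRotate (m + 1)) = trace (A ^ (m + 1)) := by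
  rw [pow_succ', trace_mul_pow_eq_sum_path]
  refine Fintype.sum_congr _ _ fun g => ?_
  rw [Fin.prod_univ_castSucc]
  simp

theorem permTrace_of_isCycle {σ : Perm ι} (hσ : σ.IsCycle) (hsupp : σ.support = univ) :
    permTrace A σ = trace (A ^ Fintype.card ι) := by
  obtain ⟨m, hm⟩ : ∃ m, Fintype.card ι = m + 1 + 1 :=
    ⟨Fintype.card ι - 2, by have := hσ.two_le_card_support; rw [hsupp, card_univ] at this; omega⟩
  let e := Fintype.equivFinOfCardEq hm
  obtain ⟨τ, hτ⟩ := isConj_iff.1 <| (hσ.permCongr e).isConj (isCycle_finRotate (n := m)) <| by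
    rw [Perm.support_permCongr, card_map, hsupp, card_univ, hm, support_finRotate, card_univ,
      Fintype.card_fin]
  rw [hm, ← permTrace_finRotate, ← hτ, ← permCongr_eq_mul, permTrace_permCongr,
    permTrace_permCongr]

theorem permTrace_eq_prod_partition (σ : Perm ι) :
    permTrace A σ = (σ.partition.parts.map fun ℓ => trace (A ^ ℓ)).prod := by
  obtain ⟨N, hN⟩ : ∃ N, Fintype.card ι = N := ⟨_, rfl⟩
  induction N using Nat.strong_induction_on generalizing ι with
  | _ N ih =>
  by_cases hσ : σ = 1
  · subst hσ
    rw [permTrace_one, Perm.parts_partition, Perm.cycleType_one, Perm.support_one, card_empty,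
      zero_add, Nat.sub_zero, Multiset.map_replicate, Multiset.prod_replicate, pow_one]
  obtain ⟨a, ha⟩ : ∃ a, σ a ≠ a := not_forall.1 fun h => hσ (Equiv.ext h)
  have hcyc := Perm.isCycle_subtypePerm_sameCycle ha
  have hsupp := Perm.support_subtypePerm_sameCycle ha
  rw [← Perm.subtypeCongr_subtypePerm σ fun _ => Perm.sameCycle_apply_right,
    permTrace_subtypeCongr, Perm.parts_partition_subtypeCongr, Multiset.map_add, Multiset.prod_add,
    permTrace_of_isCycle A hcyc hsupp, Perm.parts_partition_of_isCycle hcyc hsupp,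
    ih _ (hN ▸ Fintype.card_subtype_lt (x := a) (not_not.2 (.refl _ _))) _ rfl]
  simp

end CommSemiring

section CommRing

variable {R : Type*} [CommRing R] (A : Matrix n n R)

theorem sum_sign_mul_permTrace :
    ∑ σ : Perm ι, (Perm.sign σ : R) * permTrace A σ = ∑ g : ι → n, (A.submatrix g g).det := by
  simp_rw [permTrace, mul_sum]
  rw [sum_comm]
  exact sum_congr rfl fun g _ => (det_apply' (A.submatrix g g)).symm

variable [DecidableEq n]

theorem sum_det_submatrix_eq_factorial_mul (k : ℕ) :
    ∑ g : Fin k → n, (A.submatrix g g).det =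
      k ! * ∑ s ∈ univ.powersetCard k, (A.submatrix (Subtype.val : s → n) Subtype.val).det := by
  calc ∑ g : Fin k → n, (A.submatrix g g).det
      = ∑ g with Function.Injective g, (A.submatrix g g).det := by
        refine (sum_filter_of_ne fun g _ hg => ?_).symm
        by_contra hinj
        obtain ⟨i, j, hij, hne⟩ := Function.not_injective_iff.1 hinj
        exact hg (det_zero_of_row_eq hne (by ext; simp [hij]))
    _ = ∑ s ∈ univ.powersetCard k, ∑ e : Fin k ≃ s,
          ((A.submatrix (Subtype.val : s → n) Subtype.val).submatrix e e).det :=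
        sum_filter_injective_eq_sum_powersetCard k _
    _ = k ! * ∑ s ∈ univ.powersetCard k, (A.submatrix (Subtype.val : s → n) Subtype.val).det := by
        rw [mul_sum]
        refine sum_congr rfl fun s hs => ?_
        have e : Fin k ≃ s := (s.equivFinOfCardEq (mem_powersetCard.1 hs).2).symm
        simp only [det_submatrix_equiv_self, sum_const, card_univ, Fintype.card_equiv e,
          Fintype.card_fin, nsmul_eq_mul]

theorem det_one_add_eq_sum_det_submatrix :
    det (1 + A) = ∑ s : Finset n, (A.submatrix (Subtype.val : s → n) Subtype.val).det := by
  rw [add_comm]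
  exact (detRowAlternating.map_add_univ A.row (1 : Matrix n n R).row).trans
    (sum_congr rfl fun s _ => det_piecewise_one_eq_submatrix_det A s)

end CommRing

end Matrix

/-- **Lemma (determinant as a sum over the symmetric groups).** For a `d × d` complex
matrix `A`, `det(I + A) = Σ_{n=0}^d (1/n!) Σ_{σ ∈ S_n} sgn(σ) Π_c tr(A^{ℓ(c)})`, where the
product runs over the disjoint cycles of `σ`; fixed points (cycles of length 1) contribute
the factor `tr(A)^{#fixed points}` and the nontrivial cycles are recorded by `σ.cycleType`. -/
theorem det_one_add_eq_sum_over_symmetric_groups (d : ℕ) (A : Matrix (Fin d) (Fin d) ℂ) :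
    Matrix.det (1 + A) =
      ∑ n ∈ Finset.range (d + 1), (n.factorial : ℂ)⁻¹ *
        ∑ σ : Equiv.Perm (Fin n), ((Equiv.Perm.sign σ : ℤ) : ℂ) *
          (Matrix.trace A ^ (n - σ.support.card) *
            ((σ.cycleType.map fun ℓ => Matrix.trace (A ^ ℓ)).prod)) := by
  have hsummand (n : ℕ) (σ : Perm (Fin n)) :
      trace A ^ (n - #σ.support) * (σ.cycleType.map fun ℓ => trace (A ^ ℓ)).prod =
        permTrace A σ := by
    rw [permTrace_eq_prod_partition, Perm.parts_partition, Multiset.map_add, Multiset.prod_add,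
      Multiset.map_replicate, Multiset.prod_replicate, pow_one, Fintype.card_fin, mul_comm]
  simp_rw [hsummand, sum_sign_mul_permTrace, sum_det_submatrix_eq_factorial_mul,
    inv_mul_cancel_left₀ (Nat.cast_ne_zero.2 (Nat.factorial_ne_zero _) : ((_ ! : ℕ) : ℂ) ≠ 0),
    det_one_add_eq_sum_det_submatrix, ← powerset_univ, sum_powerset, card_univ, Fintype.card_fin]
end

section
/- Let X = (X_1,…,X_g) be a g-tuple of k×k complex matrices and Y = (Y_1,…,Y_g) a g-tuple of k'×k' complex matrices. Then the spectral radius of Σ_{j=1}^g X_j ⊗ conj(Y_j) is at most rad_out(X) · rad_out(Y), i.e. at most (spectral radius of Σ_j X_j ⊗ conj(X_j))^{1/2} · (spectral radius of Σ_j Y_j ⊗ conj(Y_j))^{1/2}. -/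
/-!
Write `Z = Σⱼ Xⱼ ⊗ conj Yⱼ`, `A = Σⱼ Xⱼ ⊗ conj Xⱼ`, `B = Σⱼ Yⱼ ⊗ conj Yⱼ`. Expanding over words `w`
of length `n`, `Zⁿ = Σ_w X_w ⊗ conj Y_w`, so the entries of `Zⁿ` are sums `Σ_w (X_w)ᵢₗ conj (Y_w)ᵢ'ₗ'`,
and by Cauchy–Schwarz their squares are bounded by products of the diagonal entries
`Σ_w |(X_w)ᵢₗ|²` of `Aⁿ` and `Σ_w |(Y_w)ᵢ'ₗ'|²` of `Bⁿ`. In the `ℓ∞` operator norm this gives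
`‖Zⁿ‖ ≤ C (‖Aⁿ‖ ‖Bⁿ‖)^{1/2}` with `C` the dimension, and Gelfand's formula turns it, after taking
`n`-th roots, into `ρ(Z) ≤ ρ(A)^{1/2} ρ(B)^{1/2}`.
-/

open Matrix Finset Filter
open scoped Kronecker ENNReal NNReal Topology ComplexConjugate

attribute [local instance] Matrix.linftyOpSeminormedAddCommGroup Matrix.linftyOpNormedRing
  Matrix.linftyOpNormedAlgebra

theorem ENNReal.tendsto_coe_rpow_one_div_nhds_one {C : ℝ≥0} (hC : C ≠ 0) :
    Tendsto (fun n : ℕ => (C : ℝ≥0∞) ^ (1 / n : ℝ)) atTop (𝓝 1) := by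
  have h := (tendsto_const_nhds (x := C)).nnrpow
    (tendsto_one_div_atTop_nhds_zero_nat (𝕜 := ℝ)) (Or.inl hC)
  rw [NNReal.rpow_zero] at h
  simpa [ENNReal.coe_rpow_of_ne_zero hC] using ENNReal.tendsto_coe.2 h

namespace spectrum

theorem spectralRadius_ne_top {𝕜 A : Type*} [NontriviallyNormedField 𝕜] [NormedRing A]
    [NormedAlgebra 𝕜 A] [CompleteSpace A] (a : A) : spectralRadius 𝕜 a ≠ ⊤ := by
  refine ne_top_of_le_ne_top ?_ (spectralRadius_le_pow_nnnorm_pow_one_div 𝕜 a 0)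
  simp [ENNReal.mul_ne_top]

variable {A B E : Type*} [NormedRing A] [NormedAlgebra ℂ A] [CompleteSpace A] [NormedRing B]
  [NormedAlgebra ℂ B] [CompleteSpace B] [NormedRing E] [NormedAlgebra ℂ E] [CompleteSpace E]

theorem spectralRadius_le_rpow_mul_rpow_of_nnnorm_pow_le {a : A} {b : B} {c : E} (C : ℝ≥0)
    (h : ∀ n : ℕ, ‖c ^ n‖₊ ≤ C * NNReal.sqrt (‖a ^ n‖₊ * ‖b ^ n‖₊)) :
    spectralRadius ℂ c ≤ spectralRadius ℂ a ^ (1 / 2 : ℝ) * spectralRadius ℂ b ^ (1 / 2 : ℝ) := by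
  set s : ℝ := 1 / 2
  -- `C + 1` rather than `C`, so that the `n`-th roots of the constant tend to `1`
  set C' : ℝ≥0∞ := ((C + 1 : ℝ≥0) : ℝ≥0∞)
  have hbound : ∀ n : ℕ,
      (‖c ^ n‖₊ : ℝ≥0∞) ≤ C' * (‖a ^ n‖₊ : ℝ≥0∞) ^ s * (‖b ^ n‖₊ : ℝ≥0∞) ^ s := by
    intro n
    have hn : ‖c ^ n‖₊ ≤ (C + 1) * NNReal.sqrt (‖a ^ n‖₊ * ‖b ^ n‖₊) :=
      (h n).trans (by gcongr; exact le_self_add)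
    rw [NNReal.sqrt_eq_rpow] at hn
    rw [mul_assoc, ← ENNReal.mul_rpow_of_nonneg _ _ (by norm_num), ← ENNReal.coe_mul,
      ← ENNReal.coe_rpow_of_nonneg _ (by norm_num), ← ENNReal.coe_mul]
    exact_mod_cast hn
  have hroot : ∀ n : ℕ, (‖c ^ n‖₊ : ℝ≥0∞) ^ (1 / n : ℝ) ≤ C' ^ (1 / n : ℝ) *
      ((‖a ^ n‖₊ : ℝ≥0∞) ^ (1 / n : ℝ)) ^ s * ((‖b ^ n‖₊ : ℝ≥0∞) ^ (1 / n : ℝ)) ^ s := by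
    intro n
    have hn : (0 : ℝ) ≤ 1 / n := by positivity
    refine (ENNReal.rpow_le_rpow (hbound n) hn).trans_eq ?_
    rw [ENNReal.mul_rpow_of_nonneg _ _ hn, ENNReal.mul_rpow_of_nonneg _ _ hn,
      ← ENNReal.rpow_mul, ← ENNReal.rpow_mul, ← ENNReal.rpow_mul, ← ENNReal.rpow_mul, mul_comm s]
  have hρa := ENNReal.rpow_ne_top_of_nonneg (by norm_num : 0 ≤ s) (spectralRadius_ne_top (𝕜 := ℂ) a)
  have hρb := ENNReal.rpow_ne_top_of_nonneg (by norm_num : 0 ≤ s) (spectralRadius_ne_top (𝕜 := ℂ) b)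
  have hlim := ENNReal.Tendsto.mul
    (ENNReal.Tendsto.mul (ENNReal.tendsto_coe_rpow_one_div_nhds_one (C := C + 1) (by positivity))
      (Or.inl one_ne_zero) ((pow_nnnorm_pow_one_div_tendsto_nhds_spectralRadius a).ennrpow_const s)
      (Or.inr ENNReal.one_ne_top))
    (Or.inr hρb) ((pow_nnnorm_pow_one_div_tendsto_nhds_spectralRadius b).ennrpow_const s)
    (Or.inr (by rwa [one_mul]))
  simpa using le_of_tendsto_of_tendsto'
    (pow_nnnorm_pow_one_div_tendsto_nhds_spectralRadius c) hlim hroot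

end spectrum

namespace Matrix

section LinftyOpNorm

variable {m n α : Type*} [Fintype m] [Fintype n] [SeminormedAddCommGroup α]

theorem nnnorm_apply_le_linfty_opNNNorm (M : Matrix m n α) (i : m) (j : n) :
    ‖M i j‖₊ ≤ ‖M‖₊ := by
  rw [linfty_opNNNorm_def]
  exact (Finset.single_le_sum (fun _ _ => zero_le) (mem_univ j)).trans
    (Finset.le_sup (f := fun i => ∑ j, ‖M i j‖₊) (mem_univ i))

theorem linfty_opNNNorm_le_card_mul {M : Matrix m n α} {r : ℝ≥0} (h : ∀ i j, ‖M i j‖₊ ≤ r) :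
    ‖M‖₊ ≤ Fintype.card n * r := by
  rw [linfty_opNNNorm_def]
  refine Finset.sup_le fun i _ => ?_
  simpa using Finset.sum_le_sum fun j (_ : j ∈ univ) => h i j

end LinftyOpNorm

section KroneckerConjSum

variable {ι κ m n R 𝕜 : Type*} [Fintype ι] [Fintype κ]

def kroneckerConjSum [CommSemiring R] [StarRing R] (X : ι → Matrix m m R)
    (Y : ι → Matrix n n R) : Matrix (m × n) (m × n) R :=
  ∑ j, X j ⊗ₖ (Y j).map (starRingEnd R)

section CommSemiring

variable [CommSemiring R] [StarRing R]

theorem kroneckerConjSum_comp_equiv (e : κ ≃ ι) (X : ι → Matrix m m R)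
    (Y : ι → Matrix n n R) : kroneckerConjSum (X ∘ e) (Y ∘ e) = kroneckerConjSum X Y :=
  Fintype.sum_equiv e _ _ fun _ => rfl

theorem kroneckerConjSum_apply (X : ι → Matrix m m R) (Y : ι → Matrix n n R)
    (i l : m) (i' l' : n) :
    kroneckerConjSum X Y (i, i') (l, l') = ∑ j, X j i l * conj (Y j i' l') := by
  simp [kroneckerConjSum, Matrix.sum_apply]

variable [Fintype m] [Fintype n]

theorem kroneckerConjSum_mul (X : ι → Matrix m m R) (Y : ι → Matrix n n R)
    (X' : κ → Matrix m m R) (Y' : κ → Matrix n n R) :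
    kroneckerConjSum X Y * kroneckerConjSum X' Y' =
      kroneckerConjSum (fun p : ι × κ => X p.1 * X' p.2) (fun p => Y p.1 * Y' p.2) := by
  simp only [kroneckerConjSum, Finset.sum_mul_sum, ← mul_kronecker_mul, Matrix.map_mul]
  rw [Fintype.sum_prod_type]

theorem kroneckerConjSum_pow [DecidableEq m] [DecidableEq n] (X : ι → Matrix m m R)
    (Y : ι → Matrix n n R) (k : ℕ) :
    kroneckerConjSum X Y ^ k =
      kroneckerConjSum (fun w : Fin k → ι => (List.ofFn fun i => X (w i)).prod)
        (fun w => (List.ofFn fun i => Y (w i)).prod) := by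
  induction k with
  | zero => simp [kroneckerConjSum]
  | succ k ih =>
    rw [pow_succ', ih, kroneckerConjSum_mul,
      ← kroneckerConjSum_comp_equiv (Fin.consEquiv fun _ => ι)]
    congr 1 <;> ext1 p <;> simp [Fin.consEquiv, List.ofFn_succ]

end CommSemiring

variable [RCLike 𝕜]

theorem norm_kroneckerConjSum_self_apply (X : ι → Matrix m m 𝕜) (i l : m) :
    ‖kroneckerConjSum X X (i, i) (l, l)‖ = ∑ j, ‖X j i l‖ ^ 2 := by
  simp_rw [kroneckerConjSum_apply, RCLike.mul_conj]
  norm_cast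
  exact abs_of_nonneg (by positivity)

theorem norm_kroneckerConjSum_apply_sq_le (X : ι → Matrix m m 𝕜) (Y : ι → Matrix n n 𝕜)
    (i l : m) (i' l' : n) :
    ‖kroneckerConjSum X Y (i, i') (l, l')‖ ^ 2 ≤
      ‖kroneckerConjSum X X (i, i) (l, l)‖ * ‖kroneckerConjSum Y Y (i', i') (l', l')‖ := by
  rw [norm_kroneckerConjSum_self_apply, norm_kroneckerConjSum_self_apply, kroneckerConjSum_apply]
  calc _ ≤ (∑ j, ‖X j i l‖ * ‖Y j i' l'‖) ^ 2 := by
        gcongr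
        exact (norm_sum_le _ _).trans_eq (by simp)
    _ ≤ _ := Finset.sum_mul_sq_le_sq_mul_sq _ _ _

variable [Fintype m] [Fintype n]

theorem linfty_opNNNorm_kroneckerConjSum_le (X : ι → Matrix m m 𝕜) (Y : ι → Matrix n n 𝕜) :
    ‖kroneckerConjSum X Y‖₊ ≤ Fintype.card (m × n) *
      NNReal.sqrt (‖kroneckerConjSum X X‖₊ * ‖kroneckerConjSum Y Y‖₊) := by
  refine linfty_opNNNorm_le_card_mul fun ⟨i, i'⟩ ⟨l, l'⟩ => ?_
  rw [← NNReal.sqrt_sq ‖_‖₊]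
  gcongr
  calc _ ≤ ‖kroneckerConjSum X X (i, i) (l, l)‖₊ * ‖kroneckerConjSum Y Y (i', i') (l', l')‖₊ := by
        exact_mod_cast norm_kroneckerConjSum_apply_sq_le X Y i l i' l'
    _ ≤ _ := mul_le_mul' (nnnorm_apply_le_linfty_opNNNorm _ _ _)
        (nnnorm_apply_le_linfty_opNNNorm _ _ _)

theorem linfty_opNNNorm_kroneckerConjSum_pow_le [DecidableEq m] [DecidableEq n]
    (X : ι → Matrix m m 𝕜) (Y : ι → Matrix n n 𝕜) (k : ℕ) :
    ‖kroneckerConjSum X Y ^ k‖₊ ≤ Fintype.card (m × n) *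
      NNReal.sqrt (‖kroneckerConjSum X X ^ k‖₊ * ‖kroneckerConjSum Y Y ^ k‖₊) := by
  simpa only [kroneckerConjSum_pow] using linfty_opNNNorm_kroneckerConjSum_le _ _

end KroneckerConjSum

end Matrix

/-- **Proposition (Cauchy–Schwarz for the outer spectral radius).** For `g`-tuples `X` of
`k × k` and `Y` of `k' × k'` complex matrices, the spectral radius of
`Σⱼ Xⱼ ⊗ conj(Yⱼ)` is at most `rad_out(X) · rad_out(Y)`. -/
theorem spectralRadius_kronecker_le_outer_mul_outer (g k k' : ℕ)
    (X : Fin g → Matrix (Fin k) (Fin k) ℂ) (Y : Fin g → Matrix (Fin k') (Fin k') ℂ) :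
    spectralRadius ℂ (∑ j, X j ⊗ₖ (Y j).map (starRingEnd ℂ)) ≤
      spectralRadius ℂ (∑ j, X j ⊗ₖ (X j).map (starRingEnd ℂ)) ^ (1 / 2 : ℝ) *
        spectralRadius ℂ (∑ j, Y j ⊗ₖ (Y j).map (starRingEnd ℂ)) ^ (1 / 2 : ℝ) :=
  spectrum.spectralRadius_le_rpow_mul_rpow_of_nnnorm_pow_le _
    (linfty_opNNNorm_kroneckerConjSum_pow_le X Y)
end

section
/- Let α and β be multi-indices in ℕ^g of weights n and m respectively with α ≠ β, and let σ ∈ S_n and τ ∈ S_m. Then for every d ≥ 1, ∫_{U(d)^g} p_{σ,α}(U) · conj(p_{τ,β}(U)) dU = 0. -/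
open MeasureTheory Matrix

noncomputable section

abbrev UG (d : ℕ) : Type := Matrix.unitaryGroup (Fin d) ℂ

instance (d : ℕ) : CompactSpace (UG d) := by
  refine isCompact_iff_compactSpace.mp ?_
  have hsub : (Matrix.unitaryGroup (Fin d) ℂ : Set (Matrix (Fin d) (Fin d) ℂ)) ⊆
      Set.pi Set.univ (fun _ : Fin d => Set.pi Set.univ fun _ : Fin d =>
        Metric.closedBall (0 : ℂ) 1) := by
    intro M hM i _ j _
    simpa [Metric.mem_closedBall, dist_zero_right] using
      entry_norm_bound_of_unitary hM i j
  have hcomp : IsCompact (Set.pi Set.univ fun _ : Fin d => Set.pi Set.univ fun _ : Fin d =>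
      Metric.closedBall (0 : ℂ) 1) :=
    isCompact_univ_pi fun _ => isCompact_univ_pi fun _ => isCompact_closedBall 0 1
  have hclosed : IsClosed (Matrix.unitaryGroup (Fin d) ℂ : Set (Matrix (Fin d) (Fin d) ℂ)) := by
    have heq : (Matrix.unitaryGroup (Fin d) ℂ : Set (Matrix (Fin d) (Fin d) ℂ)) =
        ((fun M : Matrix (Fin d) (Fin d) ℂ => star M * M) ⁻¹' {1}) ∩
        ((fun M : Matrix (Fin d) (Fin d) ℂ => M * star M) ⁻¹' {1}) := by
      ext M
      simp [Unitary.mem_iff, Set.mem_preimage]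
    rw [heq]
    exact (isClosed_singleton.preimage (continuous_id.matrix_conjTranspose.matrix_mul
      continuous_id)).inter
      (isClosed_singleton.preimage (continuous_id.matrix_mul
        continuous_id.matrix_conjTranspose))
  exact hcomp.of_isClosed_subset hclosed hsub

instance (d : ℕ) : IsTopologicalGroup (UG d) where
  continuous_mul := continuous_mul
  continuous_inv := by
    have h : (fun U : UG d => U⁻¹) = fun U : UG d => star U := rfl
    rw [h]
    exact (continuous_subtype_val.matrix_conjTranspose).subtype_mk _

instance (d : ℕ) : MeasurableSpace (UG d) := borel _
instance (d : ℕ) : BorelSpace (UG d) := ⟨rfl⟩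

/-- The normalized Haar probability measure on the unitary group `U(d)`. -/
def haarUG (d : ℕ) : Measure (UG d) :=
  ((Measure.haar : Measure (UG d)) Set.univ)⁻¹ • (Measure.haar : Measure (UG d))

/-- The product of `g` copies of normalized Haar measure on `U(d)`. -/
def haarPow (g d : ℕ) : Measure (Fin g → UG d) := Measure.pi fun _ => haarUG d


/-- `partialSum α j = α₀ + ⋯ + α_{j-1}` (out-of-range parts count as `0`). -/
def partialSum {g : ℕ} (α : Fin g → ℕ) (j : ℕ) : ℕ :=
  ∑ t ∈ Finset.range j, if h : t < g then α ⟨t, h⟩ else 0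

/-- The index `j(i)` of the block of the multi-index `α` containing position `i`
(`0`-indexed): the unique `j` with `α₀ + ⋯ + α_{j-1} ≤ i < α₀ + ⋯ + α_j`, whenever
`i < |α|`. -/
def blockIdx {g : ℕ} (α : Fin g → ℕ) (i : ℕ) : ℕ :=
  ((Finset.range g).filter fun j => partialSum α (j + 1) ≤ i).card

/-- The matrix `A_{j(i)}` attached to position `i` by the multi-index `α`. -/
def blockMat {g m : ℕ} (α : Fin g → ℕ) (A : Fin g → Matrix (Fin m) (Fin m) ℂ) (i : ℕ) :
    Matrix (Fin m) (Fin m) ℂ :=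
  if h : blockIdx α i < g then A ⟨blockIdx α i, h⟩ else 1

/-- The tensor power `A₁^{⊗α₁} ⊗ ⋯ ⊗ A_g^{⊗α_g}`, as a matrix indexed by functions
`Fin n → Fin m`; its `(f, h)` entry is `Π_{i} (A_{j(i)})_{f i, h i}`. -/
def tensorPow (g m n : ℕ) (α : Fin g → ℕ) (A : Fin g → Matrix (Fin m) (Fin m) ℂ) :
    Matrix (Fin n → Fin m) (Fin n → Fin m) ℂ :=
  Matrix.of fun f h => ∏ i : Fin n, blockMat α A (i : ℕ) (f i) (h i)

/-- The matrix of the operator permuting the tensor factors of `(ℂ^m)^{⊗n}` according to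
`σ`: its `(f, h)` entry is `1` if `h = f ∘ σ` and `0` otherwise. -/
def permMat (m n : ℕ) (σ : Equiv.Perm (Fin n)) :
    Matrix (Fin n → Fin m) (Fin n → Fin m) ℂ :=
  Matrix.of fun f h => if h = f ∘ σ then 1 else 0

/-- The generalized power-sum trace monomial
`p_{σ,α}(A) = tr(ρ(σ⁻¹) ∘ A₁^{⊗α₁} ⊗ ⋯ ⊗ A_g^{⊗α_g})`,
equal to the product over the disjoint cycles `(i₁ ⋯ i_ℓ)` of `σ` (fixed points counted as
`1`-cycles) of `tr(A_{j(i₁)} ⋯ A_{j(i_ℓ)})`. -/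
def pPoly {g : ℕ} (m n : ℕ) (σ : Equiv.Perm (Fin n)) (α : Fin g → ℕ)
    (A : Fin g → Matrix (Fin m) (Fin m) ℂ) : ℂ :=
  Matrix.trace (permMat m n σ⁻¹ * tensorPow g m n α A)


open Finset

/-! Multiplying the `j₀`-th coordinate of `U ∈ U(d)^g` on the left by the central unitary `ζ • 1`,
`|ζ| = 1`, preserves the product Haar measure and scales `p_{σ,α}(U)` by `ζ ^ α j₀` and
`conj p_{τ,β}(U)` by `ζ⁻¹ ^ β j₀`. Choosing `j₀` with `α j₀ ≠ β j₀` and `ζ` with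
`ζ ^ (α j₀ - β j₀) ≠ 1`, the integral equals a multiple `≠ 1` of itself, so it vanishes. -/

section BlockIndex

variable {g : ℕ} (α : Fin g → ℕ)

lemma partialSum_mono : Monotone (partialSum α) :=
  fun _ _ h => sum_le_sum_of_subset (range_subset_range.mpr h)

lemma partialSum_succ (j : Fin g) : partialSum α (j + 1) = partialSum α j + α j := by
  rw [partialSum, sum_range_succ, dif_pos j.isLt]
  rfl

lemma partialSum_eq_sum : partialSum α g = ∑ j, α j := by
  rw [partialSum, ← Fin.sum_univ_eq_sum_range]
  simp

lemma lt_blockIdx_iff {i j : ℕ} : j < blockIdx α i ↔ j < g ∧ partialSum α (j + 1) ≤ i := by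
  constructor
  · intro hj
    by_contra hnot
    have hsub : {k ∈ range g | partialSum α (k + 1) ≤ i} ⊆ range j := by
      intro k hk
      simp only [mem_filter, mem_range] at hk ⊢
      by_contra hjk
      exact hnot ⟨by omega, (partialSum_mono α (by omega)).trans hk.2⟩
    exact absurd (card_le_card hsub) (by simpa [blockIdx] using hj)
  · rintro ⟨hjg, hj⟩
    have hsub : range (j + 1) ⊆ {k ∈ range g | partialSum α (k + 1) ≤ i} := by
      intro k hk
      simp only [mem_filter, mem_range] at hk ⊢
      exact ⟨by omega, (partialSum_mono α (by omega)).trans hj⟩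
    simpa [blockIdx] using card_le_card hsub

lemma blockIdx_eq_iff (j : Fin g) (i : ℕ) :
    blockIdx α i = j ↔ partialSum α j ≤ i ∧ i < partialSum α (j + 1) := by
  rw [le_antisymm_iff, ← not_lt, lt_blockIdx_iff, and_comm]
  refine and_congr ?_ (by simp [j.isLt])
  rcases j with ⟨_ | k, hk⟩
  · simp [partialSum]
  · simpa using lt_blockIdx_iff α (j := k) (i := i) |>.trans (and_iff_right (by omega))

lemma card_filter_blockIdx_eq {n : ℕ} (hα : ∑ j, α j = n) (j : Fin g) :
    #{i : Fin n | blockIdx α i = j} = α j := by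
  have hle : partialSum α (j + 1) ≤ n := hα ▸ partialSum_eq_sum α ▸ partialSum_mono α j.isLt
  have hfiber :
      {i ∈ range n | blockIdx α i = j} = Ico (partialSum α j) (partialSum α (j + 1)) := by
    ext i
    simp only [mem_filter, mem_range, mem_Ico, blockIdx_eq_iff]
    omega
  have hmap : ({i : Fin n | blockIdx α i = j} : Finset (Fin n)).map Fin.valEmbedding =
      {i ∈ range n | blockIdx α i = j} := by
    ext i
    simp only [mem_map, mem_filter, mem_univ, true_and, Fin.valEmbedding_apply, mem_range]
    exact ⟨fun ⟨k, hk, hki⟩ => hki ▸ ⟨k.isLt, hk⟩, fun ⟨hi, h⟩ => ⟨⟨i, hi⟩, h, rfl⟩⟩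
  rw [← card_map Fin.valEmbedding, hmap, hfiber, Nat.card_Ico, partialSum_succ]
  omega

end BlockIndex

section Scaling

variable {g m : ℕ} (α : Fin g → ℕ) (A : Fin g → Matrix (Fin m) (Fin m) ℂ) (j₀ : Fin g) (z : ℂ)

lemma blockMat_mulSingle_smul (i : ℕ) :
    blockMat α (fun j => (Pi.mulSingle j₀ z : Fin g → ℂ) j • A j) i
      = (if blockIdx α i = j₀ then z else 1) • blockMat α A i := by
  unfold blockMat
  split_ifs with hlt hj hj
  · rw [show (⟨blockIdx α i, hlt⟩ : Fin g) = j₀ from Fin.ext hj]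
    simp
  · simp [Fin.ext_iff, hj]
  · exact absurd (hj ▸ j₀.isLt) hlt
  · simp

lemma tensorPow_mulSingle_smul {n : ℕ} (hα : ∑ j, α j = n) :
    tensorPow g m n α (fun j => (Pi.mulSingle j₀ z : Fin g → ℂ) j • A j) =
      z ^ α j₀ • tensorPow g m n α A := by
  ext f h
  simp only [tensorPow, of_apply, blockMat_mulSingle_smul, Matrix.smul_apply, smul_eq_mul,
    prod_mul_distrib, prod_ite, prod_const, one_pow, mul_one, card_filter_blockIdx_eq α hα]

lemma pPoly_mulSingle_smul {n : ℕ} (hα : ∑ j, α j = n) (σ : Equiv.Perm (Fin n)) :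
    pPoly m n σ α (fun j => (Pi.mulSingle j₀ z : Fin g → ℂ) j • A j) =
      z ^ α j₀ * pPoly m n σ α A := by
  rw [pPoly, tensorPow_mulSingle_smul α A j₀ z hα, Matrix.mul_smul, trace_smul, smul_eq_mul, pPoly]

end Scaling

instance (d : ℕ) : IsProbabilityMeasure (haarUG d) := by
  constructor
  rw [haarUG, Measure.smul_apply, smul_eq_mul]
  exact ENNReal.inv_mul_cancel (isOpen_univ.measure_ne_zero _ Set.univ_nonempty)
    isCompact_univ.measure_lt_top.ne

instance (d : ℕ) : (haarUG d).IsMulLeftInvariant := by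
  unfold haarUG
  infer_instance

instance (g d : ℕ) : (haarPow g d).IsMulLeftInvariant := by
  unfold haarPow
  infer_instance

theorem integral_eq_zero_of_mul_left_eq_smul {G E 𝕜 : Type*} [Group G] [MeasurableSpace G]
    [MeasurableMul G] [NormedAddCommGroup E] [NormedSpace ℝ E] [RCLike 𝕜] [NormedSpace 𝕜 E]
    {μ : Measure G} [μ.IsMulLeftInvariant] {f : G → E} (a : G) {c : 𝕜} (hc : c ≠ 1)
    (hf : ∀ x, f (a * x) = c • f x) : ∫ x, f x ∂μ = 0 := by
  have hfix : c • ∫ x, f x ∂μ = ∫ x, f x ∂μ :=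
    calc c • ∫ x, f x ∂μ = ∫ x, f (a * x) ∂μ := by simp only [hf, integral_smul]
      _ = ∫ x, f x ∂μ := integral_mul_left_eq_self f a
  have : (c - 1) • ∫ x, f x ∂μ = 0 := by rw [sub_smul, one_smul, hfix, sub_self]
  exact (smul_eq_zero.mp this).resolve_left (sub_ne_zero.mpr hc)

lemma Circle.coe_mem_unitary (ζ : Circle) : (ζ : ℂ) ∈ unitary ℂ := by
  simp [Unitary.mem_iff, ← Circle.coe_inv_eq_conj]

lemma Circle.exists_zpow_ne_one {k : ℤ} (hk : k ≠ 0) : ∃ ζ : Circle, ζ ^ k ≠ 1 :=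
  ⟨Circle.exp (Real.pi / k), by
    rw [← Circle.exp_intCast_mul, mul_div_cancel₀ _ (Int.cast_ne_zero.mpr hk)]
    exact Circle.exp_pi_ne_one⟩

lemma Circle.coe_pow_mul_conj_pow (ζ : Circle) (a b : ℕ) :
    (ζ : ℂ) ^ a * (starRingEnd ℂ) ((ζ : ℂ) ^ b) = ↑(ζ ^ ((a : ℤ) - b)) := by
  rw [map_pow, ← Circle.coe_inv_eq_conj, _root_.zpow_sub, zpow_natCast, zpow_natCast]
  simp [inv_pow]

theorem trace_monomial_orthogonality_of_ne_general (g n m : ℕ) (α β : Fin g → ℕ)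
    (hα : ∑ j, α j = n) (hβ : ∑ j, β j = m) (hαβ : α ≠ β)
    (σ : Equiv.Perm (Fin n)) (τ : Equiv.Perm (Fin m)) (d : ℕ) :
    ∫ U : Fin g → UG d,
        pPoly d n σ α (fun j => (U j : Matrix (Fin d) (Fin d) ℂ)) *
          (starRingEnd ℂ) (pPoly d m τ β fun j => (U j : Matrix (Fin d) (Fin d) ℂ))
        ∂(haarPow g d) = 0 := by
  obtain ⟨j₀, hj₀⟩ := Function.ne_iff.mp hαβ
  obtain ⟨ζ, hζ⟩ := Circle.exists_zpow_ne_one (sub_ne_zero.mpr (Nat.cast_injective.ne hj₀))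
  let u : unitary ℂ := ⟨ζ, ζ.coe_mem_unitary⟩
  have hcoe (U : Fin g → UG d) :
      (fun j => ((Pi.mulSingle j₀ (u • 1) * U : Fin g → UG d) j : Matrix (Fin d) (Fin d) ℂ)) =
        fun j => (Pi.mulSingle j₀ (ζ : ℂ) : Fin g → ℂ) j • (U j : Matrix (Fin d) (Fin d) ℂ) := by
    funext j
    by_cases h : j = j₀ <;> simp [h, u]
  refine integral_eq_zero_of_mul_left_eq_smul (Pi.mulSingle j₀ (u • 1))
    (mt Circle.coe_eq_one.mp hζ) fun U => ?_
  rw [hcoe, pPoly_mulSingle_smul _ _ _ _ hα, pPoly_mulSingle_smul _ _ _ _ hβ, map_mul, smul_eq_mul,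
    ← Circle.coe_pow_mul_conj_pow]
  ring

/-- **Orthogonality for distinct multi-indices.** If `α ≠ β` are multi-indices of weights
`n` and `m`, then for every `d ≥ 1`,
`∫_{U(d)^g} p_{σ,α}(U) conj(p_{τ,β}(U)) dU = 0`. -/
theorem trace_monomial_orthogonality_of_ne (g n m : ℕ) (α β : Fin g → ℕ)
    (hα : ∑ j, α j = n) (hβ : ∑ j, β j = m) (hαβ : α ≠ β)
    (σ : Equiv.Perm (Fin n)) (τ : Equiv.Perm (Fin m)) (d : ℕ) (hd : 1 ≤ d) :
    ∫ U : Fin g → UG d,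
        pPoly d n σ α (fun j => (U j : Matrix (Fin d) (Fin d) ℂ)) *
          (starRingEnd ℂ) (pPoly d m τ β fun j => (U j : Matrix (Fin d) (Fin d) ℂ))
        ∂(haarPow g d) = 0 :=
  trace_monomial_orthogonality_of_ne_general g n m α β hα hβ hαβ σ τ d

end
end
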